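/- Let $d \ge 1$, $r \in \mathbb{N}$, $x \in \mathbb{R}$, and let $a_0, \dots, a_d \in \mathbb{R}$ and $\tilde a_1, \dots, \tilde a_d \in \mathbb{R}$ satisfy $|a_i - \tilde a_i| < 2^{-r}$ for $1 \le i \le d$. Define $b_i = \tilde a_i$ for $1 \le i \le d$ and $b_0 = \left( \sum_{i=0}^d a_i x^i \right) - \left( \sum_{i=1}^d \tilde a_i x^i \right)$. Then: (1) $\sum_{i=0}^d b_i x^i = \sum_{i=0}^d a_i x^i$; (2) $|b_0 - a_0| \le 2^{-r} \, d \, \max\{ |x|, |x|^d \}$; and (3) $\sum_{i=0}^d (a_i - b_i)^2 \le 2^{-2r} \, d^2 \left( 1 + \max\{ |x|, |x|^{2d} \} \right)$, i.e. the Euclidean distance in $\mathbb{R}^{d+1}$ between $(a_0, \dots, a_d)$ and $(b_0, \dots, b_d)$ is at most $d \, 2^{-r} \sqrt{ 1 + \max\{ |x|, |x|^{2d} \} }$. -/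
import Mathlib

lemma pow_le_max_aux (x : ℝ) (hx : 0 ≤ x) {i d : ℕ} (h1 : 1 ≤ i) (h2 : i ≤ d) :
    x ^ i ≤ max x (x ^ d) := by
  rcases le_total x 1 with h | h
  · refine le_max_of_le_left ?_
    calc x ^ i ≤ x ^ 1 := pow_le_pow_of_le_one hx h h1
    _ = x := pow_one x
  · exact le_max_of_le_right (pow_le_pow_right₀ h h2)

lemma sum_split_aux (d : ℕ) (f : ℕ → ℝ) :
    (∑ i ∈ Finset.range (d + 1), f i) = f 0 + ∑ i ∈ Finset.Icc 1 d, f i := by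
  have h : Finset.range (d + 1) = insert 0 (Finset.Icc 1 d) := by
    ext i; simp; omega
  rw [h, Finset.sum_insert (by simp)]

/-- Construction of a nearby coefficient vector `b` agreeing with `a` at `x`:
setting `b_i = ã_i` for `1 ≤ i ≤ d` and
`b_0 = (∑_{i=0}^d a_i x^i) - (∑_{i=1}^d ã_i x^i)`, the polynomial with
coefficients `b` takes the same value at `x`, `|b_0 - a_0|` is small, and the
squared Euclidean distance between `a` and `b` in `ℝ^{d+1}` is controlled. -/
theorem nearby_coefficient_vector (d : ℕ) (hd : 1 ≤ d) (r : ℕ) (x : ℝ)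
    (a a' : ℕ → ℝ) (ha : ∀ i, 1 ≤ i → i ≤ d → |a i - a' i| < (1/2 : ℝ) ^ r)
    (b : ℕ → ℝ)
    (hb0 : b 0 = (∑ i ∈ Finset.range (d + 1), a i * x ^ i) -
      (∑ i ∈ Finset.Icc 1 d, a' i * x ^ i))
    (hbi : ∀ i, 1 ≤ i → i ≤ d → b i = a' i) :
    (∑ i ∈ Finset.range (d + 1), b i * x ^ i) =
        (∑ i ∈ Finset.range (d + 1), a i * x ^ i) ∧
    |b 0 - a 0| ≤ (1/2 : ℝ) ^ r * d * max |x| (|x| ^ d) ∧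
    (∑ i ∈ Finset.range (d + 1), (a i - b i) ^ 2) ≤
        ((1/2 : ℝ) ^ r) ^ 2 * d ^ 2 * (1 + max |x| (|x| ^ (2 * d))) ∧
    Real.sqrt (∑ i ∈ Finset.range (d + 1), (a i - b i) ^ 2) ≤
        d * (1/2 : ℝ) ^ r * Real.sqrt (1 + max |x| (|x| ^ (2 * d))) := by
  have hpow : (0:ℝ) < (1/2 : ℝ) ^ r := by positivity
  -- equality of values
  have hsum_b : (∑ i ∈ Finset.range (d + 1), b i * x ^ i) =
      b 0 + ∑ i ∈ Finset.Icc 1 d, a' i * x ^ i := by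
    rw [sum_split_aux d (fun i => b i * x ^ i), pow_zero, mul_one]
    congr 1
    exact Finset.sum_congr rfl (fun i hi => by
      simp only [Finset.mem_Icc] at hi
      rw [hbi i hi.1 hi.2])
  have h1 : (∑ i ∈ Finset.range (d + 1), b i * x ^ i) =
      (∑ i ∈ Finset.range (d + 1), a i * x ^ i) := by
    rw [hsum_b, hb0]; ring
  -- b0 - a0 as a sum
  have hdiff : b 0 - a 0 = ∑ i ∈ Finset.Icc 1 d, (a i - a' i) * x ^ i := by
    have key : ∑ i ∈ Finset.Icc 1 d, (a i - a' i) * x ^ i =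
        (∑ i ∈ Finset.Icc 1 d, a i * x ^ i) - ∑ i ∈ Finset.Icc 1 d, a' i * x ^ i := by
      rw [← Finset.sum_sub_distrib]
      exact Finset.sum_congr rfl (fun i _ => by ring)
    rw [key, hb0, sum_split_aux d (fun i => a i * x ^ i), pow_zero, mul_one]
    ring
  have hmax0 : (0:ℝ) ≤ max |x| (|x| ^ d) := le_trans (abs_nonneg x) (le_max_left _ _)
  have h2 : |b 0 - a 0| ≤ (1/2 : ℝ) ^ r * d * max |x| (|x| ^ d) := by
    rw [hdiff]
    calc |∑ i ∈ Finset.Icc 1 d, (a i - a' i) * x ^ i|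
        ≤ ∑ i ∈ Finset.Icc 1 d, |(a i - a' i) * x ^ i| :=
          Finset.abs_sum_le_sum_abs _ _
      _ ≤ ∑ i ∈ Finset.Icc 1 d, (1/2 : ℝ) ^ r * max |x| (|x| ^ d) := by
          refine Finset.sum_le_sum (fun i hi => ?_)
          simp only [Finset.mem_Icc] at hi
          rw [abs_mul, abs_pow]
          exact mul_le_mul (le_of_lt (ha i hi.1 hi.2))
            (pow_le_max_aux |x| (abs_nonneg x) hi.1 hi.2) (by positivity) hpow.le
      _ = (1/2 : ℝ) ^ r * d * max |x| (|x| ^ d) := by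
          rw [Finset.sum_const, Nat.card_Icc]
          simp [mul_comm, mul_assoc]
          ring
  -- squared max bound
  have hmaxsq : (max |x| (|x| ^ d)) ^ 2 ≤ max |x| (|x| ^ (2 * d)) := by
    rcases le_total |x| 1 with h | h
    · have h1' : max |x| (|x| ^ d) = |x| := by
        rw [max_eq_left]
        calc |x| ^ d ≤ |x| ^ 1 := pow_le_pow_of_le_one (abs_nonneg x) h hd
        _ = |x| := pow_one _
      rw [h1']
      refine le_max_of_le_left ?_
      calc |x| ^ 2 ≤ |x| ^ 1 := pow_le_pow_of_le_one (abs_nonneg x) h (by norm_num)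
      _ = |x| := pow_one _
    · have h1' : max |x| (|x| ^ d) = |x| ^ d := by
        rw [max_eq_right]
        calc |x| = |x| ^ 1 := (pow_one _).symm
        _ ≤ |x| ^ d := pow_le_pow_right₀ h hd
      rw [h1', ← pow_mul, mul_comm d 2]
      exact le_max_right _ _
  have h3 : (∑ i ∈ Finset.range (d + 1), (a i - b i) ^ 2) ≤
      ((1/2 : ℝ) ^ r) ^ 2 * d ^ 2 * (1 + max |x| (|x| ^ (2 * d))) := by
    rw [sum_split_aux d (fun i => (a i - b i) ^ 2)]
    have hA : (a 0 - b 0) ^ 2 ≤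
        ((1/2 : ℝ) ^ r) ^ 2 * d ^ 2 * max |x| (|x| ^ (2 * d)) := by
      have : (a 0 - b 0) ^ 2 = |b 0 - a 0| ^ 2 := by
        rw [sq_abs]; ring
      rw [this]
      calc |b 0 - a 0| ^ 2 ≤ ((1/2 : ℝ) ^ r * d * max |x| (|x| ^ d)) ^ 2 :=
            pow_le_pow_left₀ (abs_nonneg _) h2 2
        _ = ((1/2 : ℝ) ^ r) ^ 2 * d ^ 2 * (max |x| (|x| ^ d)) ^ 2 := by ring
        _ ≤ ((1/2 : ℝ) ^ r) ^ 2 * d ^ 2 * max |x| (|x| ^ (2 * d)) := by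
            apply mul_le_mul_of_nonneg_left hmaxsq (by positivity)
    have hB : (∑ i ∈ Finset.Icc 1 d, (a i - b i) ^ 2) ≤
        ((1/2 : ℝ) ^ r) ^ 2 * d ^ 2 := by
      calc (∑ i ∈ Finset.Icc 1 d, (a i - b i) ^ 2)
          ≤ ∑ i ∈ Finset.Icc 1 d, ((1/2 : ℝ) ^ r) ^ 2 := by
            refine Finset.sum_le_sum (fun i hi => ?_)
            simp only [Finset.mem_Icc] at hi
            rw [hbi i hi.1 hi.2, ← sq_abs]
            exact pow_le_pow_left₀ (abs_nonneg _) (le_of_lt (ha i hi.1 hi.2)) 2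
        _ = d * ((1/2 : ℝ) ^ r) ^ 2 := by
            rw [Finset.sum_const, Nat.card_Icc]; simp [mul_comm]
        _ ≤ ((1/2 : ℝ) ^ r) ^ 2 * d ^ 2 := by
            have hd1 : (1:ℝ) ≤ (d:ℝ) := by exact_mod_cast hd
            have hdd : (d:ℝ) ≤ (d:ℝ) ^ 2 := by nlinarith
            nlinarith [mul_le_mul_of_nonneg_right hdd (sq_nonneg ((1/2:ℝ) ^ r))]
    calc (a 0 - b 0) ^ 2 + (∑ i ∈ Finset.Icc 1 d, (a i - b i) ^ 2)
        ≤ ((1/2 : ℝ) ^ r) ^ 2 * d ^ 2 * max |x| (|x| ^ (2 * d)) +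
          ((1/2 : ℝ) ^ r) ^ 2 * d ^ 2 := add_le_add hA hB
      _ = ((1/2 : ℝ) ^ r) ^ 2 * d ^ 2 * (1 + max |x| (|x| ^ (2 * d))) := by ring
  refine ⟨h1, h2, h3, ?_⟩
  calc Real.sqrt (∑ i ∈ Finset.range (d + 1), (a i - b i) ^ 2)
      ≤ Real.sqrt (((1/2 : ℝ) ^ r) ^ 2 * d ^ 2 * (1 + max |x| (|x| ^ (2 * d)))) :=
        Real.sqrt_le_sqrt h3
    _ = d * (1/2 : ℝ) ^ r * Real.sqrt (1 + max |x| (|x| ^ (2 * d))) := by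
        have : ((1/2 : ℝ) ^ r) ^ 2 * d ^ 2 * (1 + max |x| (|x| ^ (2 * d)))
            = (d * (1/2 : ℝ) ^ r) ^ 2 * (1 + max |x| (|x| ^ (2 * d))) := by ring
        rw [this, Real.sqrt_mul (sq_nonneg _), Real.sqrt_sq (by positivity)]
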